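/- arXiv:1910.05980 — 2 statements merged into one kernel-verified Lean document; each statement's English description precedes it below -/
import Mathlib

section
/- For s > 0, the map φ ↦ F^{-1}(|ξ|^s F φ) is a bijective linear isomorphism of S_∞ onto itself, with inverse φ ↦ F^{-1}(|ξ|^{-s} F φ). -/
open MeasureTheory SchwartzMap ENNReal NNReal Filter Topology
noncomputable section

/-- Euclidean space ℝ^d. -/
abbrev Rd (d : ℕ) := EuclideanSpace ℝ (Fin d)

/-- φ ∈ S_∞ : all moments of the Schwartz function φ vanish. -/
def momentsVanish {d : ℕ} (φ : 𝓢(Rd d, ℂ)) : Prop :=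
  ∀ γ : Fin d → ℕ, ∫ x : Rd d, (∏ i, (x i : ℂ) ^ γ i) * φ x = 0

/-- The fractional Laplacian Δ^{s/2} f = F⁻¹(|ξ|^s F f). -/
def fracLapFun (d : ℕ) (s : ℝ) (f : Rd d → ℂ) : Rd d → ℂ :=
  FourierTransformInv.fourierInv (fun ξ => ((‖ξ‖ ^ s : ℝ) : ℂ) * FourierTransform.fourier f ξ)

/-- The Riesz potential I_s f = F⁻¹(|ξ|^{-s} F f). -/
def rieszFun (d : ℕ) (s : ℝ) (f : Rd d → ℂ) : Rd d → ℂ :=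
  FourierTransformInv.fourierInv (fun ξ => ((‖ξ‖ ^ (-s) : ℝ) : ℂ) * FourierTransform.fourier f ξ)

/-- The Mihlin–Hörmander symbol |ξ|^s (1+|ξ|²)^{-M}. -/
def mhSymbol (d : ℕ) (s M : ℝ) (ξ : Rd d) : ℝ := ‖ξ‖ ^ s * (1 + ‖ξ‖ ^ 2) ^ (-M)

/-- g_a(x) = |a-x|^{ν-d} - |x|^{ν-d}. -/
def gFun (d : ℕ) (ν : ℝ) (a x : Rd d) : ℝ := ‖a - x‖ ^ (ν - (d : ℝ)) - ‖x‖ ^ (ν - (d : ℝ))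

/-- First finite difference D_h f(x) = f(x+h) - f(x). -/
def fdiff {d : ℕ} (h : Rd d) (f : Rd d → ℂ) : Rd d → ℂ := fun x => f (x + h) - f x

/-- Iterated finite difference D_h^k. -/
def fdiffIter {d : ℕ} (h : Rd d) (k : ℕ) (f : Rd d → ℂ) : Rd d → ℂ := (fdiff h)^[k] f

/-- f is a polynomial on ℝ^d of total degree at most m. -/
def IsPolyDeg {d : ℕ} (m : ℕ) (f : Rd d → ℂ) : Prop :=
  ∃ c : (Fin d → ℕ) → ℂ, ∀ x, f x =
    ∑ γ ∈ Finset.univ.filter (fun γ : Fin d → Fin (m + 1) => ∑ i, (γ i : ℕ) ≤ m),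
      c (fun i => (γ i : ℕ)) * ∏ i, (x i : ℂ) ^ (γ i : ℕ)

/-- The j-th Riesz transform, R_j f = F⁻¹(-i ξ_j |ξ|⁻¹ F f). -/
def rieszT (d : ℕ) (j : Fin d) (f : Rd d → ℂ) : Rd d → ℂ :=
  FourierTransformInv.fourierInv
    (fun ξ => (-Complex.I * ((ξ j : ℝ) : ℂ) / ((‖ξ‖ : ℝ) : ℂ)) * FourierTransform.fourier f ξ)

/-- Δ^{(s-1)/2} ∂_j f = F⁻¹(2πi ξ_j |ξ|^{s-1} F f). -/
def fracLapGrad (d : ℕ) (s : ℝ) (j : Fin d) (f : Rd d → ℂ) : Rd d → ℂ :=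
  FourierTransformInv.fourierInv (fun ξ =>
    (2 * Real.pi * Complex.I * ((ξ j : ℝ) : ℂ)) * ((‖ξ‖ ^ (s - 1) : ℝ) : ℂ) *
      FourierTransform.fourier f ξ)

/-- Partial derivative in direction e_i. -/
def pd {d : ℕ} (i : Fin d) (g : Rd d → ℂ) : Rd d → ℂ :=
  fun x => fderiv ℝ g x (EuclideanSpace.single i (1 : ℝ))

/-- Multi-index partial derivative ∂^α. -/
def pdMulti {d : ℕ} (α : Fin d → ℕ) (g : Rd d → ℂ) : Rd d → ℂ :=
  ((List.finRange d).foldr (fun i acc => (pd i)^[α i] ∘ acc) id) g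

/-- Littlewood–Paley piece M_j u = F⁻¹(η(2^{-j}·) F u). -/
def LPpiece (d : ℕ) (η : Rd d → ℂ) (j : ℤ) (u : Rd d → ℂ) : Rd d → ℂ :=
  FourierTransformInv.fourierInv (fun ξ => η (((2 : ℝ) ^ (-j) : ℝ) • ξ) * FourierTransform.fourier u ξ)

/-- Taylor polynomial of degree m of f centered at y, evaluated at x. -/
def taylorPoly {d : ℕ} (m : ℕ) (f : Rd d → ℂ) (y x : Rd d) : ℂ :=
  ∑ i ∈ Finset.range (m + 1),
    ((i.factorial : ℂ))⁻¹ * iteratedFDeriv ℝ i f y (fun _ => x - y)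

/-!
On the Fourier side, `S_∞` consists of the Schwartz functions that are flat at the origin: the
`n`-th derivative of `𝓕 φ` at `0` is `(-2πi)^n` times the `n`-th moments of `φ`. Multiplication
by `‖ξ‖ ^ r` preserves flat Schwartz functions for every real `r`. Indeed, the derivative of
`‖ξ‖ ^ r • g ξ` is `‖ξ‖ ^ r • g' ξ + r ‖ξ‖ ^ (r - 2) • ⟪ξ, ·⟫ g ξ`, a sum of terms of the same shape
with flat Schwartz coefficients, so smoothness, flatness and decay follow by induction on the
order of the derivative; the singularity of `‖ξ‖ ^ r` at `0` is absorbed by `g ξ = O(‖ξ‖ ^ N)`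
for every `N`. Hence `F⁻¹ ‖ξ‖ ^ r F` maps `S_∞` into itself, and since the exponents add, the
operators for `s` and `-s` are inverse to each other.
-/

open FourierTransform
open scoped ContDiff

universe u

section Flat

variable {E F G H : Type*} [NormedAddCommGroup E] [NormedSpace ℝ E]
  [NormedAddCommGroup F] [NormedSpace ℝ F] [NormedAddCommGroup G] [NormedSpace ℝ G]
  [NormedAddCommGroup H] [NormedSpace ℝ H]

def FlatAt (f : E → F) (x : E) : Prop := ∀ n, iteratedFDeriv ℝ n f x = 0

theorem FlatAt.apply_eq_zero {f : E → F} {x : E} (hf : FlatAt f x) : f x = 0 := by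
  simpa using congr($(hf 0) ![])

theorem FlatAt.fderiv {f : E → F} {x : E} (hf : FlatAt f x) : FlatAt (fderiv ℝ f) x := fun n =>
  norm_eq_zero.1 <| by rw [norm_iteratedFDeriv_fderiv, hf, norm_zero]

theorem FlatAt.bilinear (B : F →L[ℝ] G →L[ℝ] H) {f : E → F} {g : E → G} {x : E}
    (hf : FlatAt f x) (hfs : ContDiff ℝ ∞ f) (hgs : ContDiff ℝ ∞ g) :
    FlatAt (fun y => B (f y) (g y)) x := fun n => by
  refine norm_le_zero_iff.1 ((B.norm_iteratedFDeriv_le_of_bilinear hfs hgs x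
    (mod_cast le_top)).trans ?_)
  simp [hf _]

end Flat

section FlatSchwartz

-- one universe for `E` and `F`: the inductions below pass from `F` to `E →L[ℝ] F`
variable {E : Type u} [NormedAddCommGroup E] {F : Type u} [NormedAddCommGroup F]
  [NormedSpace ℝ F]

theorem FlatAt.fderivCLM [NormedSpace ℝ E] {f : 𝓢(E, F)} {x : E} (hf : FlatAt f x) :
    FlatAt (SchwartzMap.fderivCLM ℝ E F f) x :=
  hf.fderiv

theorem SchwartzMap.exists_norm_le_mul_pow_of_flatAt [NormedSpace ℝ E] {f : 𝓢(E, F)}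
    (hf : FlatAt f 0) (N : ℕ) : ∃ C, 0 ≤ C ∧ ∀ x : E, ‖x‖ ≤ 1 → ‖f x‖ ≤ C * ‖x‖ ^ N := by
  induction N generalizing F with
  | zero =>
    obtain ⟨C, hC⟩ := f.decay 0 0
    exact ⟨C, hC.1.le, fun x _ => by simpa using hC.2 x⟩
  | succ N ih =>
    obtain ⟨C, hC0, hC⟩ := ih hf.fderivCLM
    refine ⟨C, hC0, fun x hx => ?_⟩
    have hmvt : ‖f x - f 0‖ ≤ C * ‖x‖ ^ N * ‖x - 0‖ :=
      (convex_closedBall (0 : E) ‖x‖).norm_image_sub_le_of_norm_fderiv_le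
        (fun y _ => f.differentiableAt)
        (fun y hy => (hC y ((mem_closedBall_zero_iff.1 hy).trans hx)).trans
          (by gcongr; exact mem_closedBall_zero_iff.1 hy))
        (by simp) (by simp)
    rw [hf.apply_eq_zero, sub_zero, sub_zero] at hmvt
    calc ‖f x‖ ≤ C * ‖x‖ ^ N * ‖x‖ := hmvt
      _ = C * ‖x‖ ^ (N + 1) := by ring

variable [InnerProductSpace ℝ E]

theorem hasFDerivAt_norm_rpow_of_ne_zero (r : ℝ) {x : E} (hx : x ≠ 0) :
    HasFDerivAt (fun y : E => ‖y‖ ^ r) ((r * ‖x‖ ^ (r - 2)) • innerSL ℝ x) x := by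
  have h := ((hasStrictFDerivAt_norm_sq x).rpow_const (p := r / 2) (by simp [hx])).hasFDerivAt
  have hsq : ∀ y : E, (‖y‖ ^ 2) ^ (r / 2) = ‖y‖ ^ r := fun y => by
    rw [← Real.rpow_natCast_mul (norm_nonneg y)]; ring_nf
  have hsq' : (‖x‖ ^ 2) ^ (r / 2 - 1) = ‖x‖ ^ (r - 2) := by
    rw [← Real.rpow_natCast_mul (norm_nonneg x)]; ring_nf
  simp only [hsq, hsq'] at h
  convert h using 1
  rw [← Nat.cast_smul_eq_nsmul ℝ, smul_smul]
  ring_nf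

namespace SchwartzMap

def innerSMulRight (f : 𝓢(E, F)) : 𝓢(E, E →L[ℝ] F) :=
  bilinLeftCLM (ContinuousLinearMap.smulRightL ℝ E F).flip (innerSL ℝ).hasTemperateGrowth f

theorem innerSMulRight_apply (f : 𝓢(E, F)) (x : E) :
    innerSMulRight f x = (innerSL ℝ x).smulRight (f x) := rfl

theorem _root_.FlatAt.innerSMulRight {f : 𝓢(E, F)} (hf : FlatAt f 0) :
    FlatAt (innerSMulRight f) 0 :=
  hf.bilinear _ (f.smooth ⊤) (innerSL ℝ).contDiff

theorem exists_norm_rpow_smul_le_mul_pow {f : 𝓢(E, F)} (hf : FlatAt f 0) (r : ℝ) (m : ℕ) :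
    ∃ C, 0 ≤ C ∧ ∀ x : E, ‖x‖ ≤ 1 → ‖‖x‖ ^ r • f x‖ ≤ C * ‖x‖ ^ m := by
  obtain ⟨C, hC0, hC⟩ := exists_norm_le_mul_pow_of_flatAt hf (m + ⌈-r⌉₊)
  refine ⟨C, hC0, fun x hx => ?_⟩
  rcases eq_or_ne x 0 with rfl | hx0
  · simp only [hf.apply_eq_zero, smul_zero, norm_zero]
    positivity
  have hpos : 0 < ‖x‖ := norm_pos_iff.2 hx0
  have hexp : ‖x‖ ^ r * ‖x‖ ^ (m + ⌈-r⌉₊) ≤ ‖x‖ ^ m := by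
    rw [← Real.rpow_natCast, ← Real.rpow_natCast, ← Real.rpow_add hpos]
    refine Real.rpow_le_rpow_of_exponent_ge hpos hx ?_
    push_cast
    linarith [Nat.le_ceil (-r)]
  calc ‖‖x‖ ^ r • f x‖ = ‖x‖ ^ r * ‖f x‖ := by
        rw [norm_smul, Real.norm_of_nonneg (by positivity)]
    _ ≤ ‖x‖ ^ r * (C * ‖x‖ ^ (m + ⌈-r⌉₊)) := by gcongr; exact hC x hx
    _ ≤ C * ‖x‖ ^ m := by nlinarith

theorem exists_pow_mul_norm_rpow_smul_le {f : 𝓢(E, F)} (hf : FlatAt f 0) (r : ℝ) (k : ℕ) :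
    ∃ C, ∀ x : E, ‖x‖ ^ k * ‖‖x‖ ^ r • f x‖ ≤ C := by
  obtain ⟨C₁, -, hC₁⟩ := exists_norm_rpow_smul_le_mul_pow hf r 0
  obtain ⟨C₂, -, hC₂⟩ := f.decay (k + ⌈r⌉₊) 0
  refine ⟨max C₁ C₂, fun x => ?_⟩
  rw [norm_smul, Real.norm_of_nonneg (by positivity)]
  rcases le_or_gt ‖x‖ 1 with hx | hx
  · have := hC₁ x hx
    rw [norm_smul, Real.norm_of_nonneg (by positivity)] at this
    calc ‖x‖ ^ k * (‖x‖ ^ r * ‖f x‖) ≤ 1 * C₁ :=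
          mul_le_mul (pow_le_one₀ (norm_nonneg x) hx) (by simpa using this) (by positivity)
            zero_le_one
      _ ≤ max C₁ C₂ := by simp
  · have hr : ‖x‖ ^ r ≤ ‖x‖ ^ ⌈r⌉₊ := by
      rw [← Real.rpow_natCast]
      exact Real.rpow_le_rpow_of_exponent_le hx.le (Nat.le_ceil r)
    calc ‖x‖ ^ k * (‖x‖ ^ r * ‖f x‖) ≤ ‖x‖ ^ k * (‖x‖ ^ ⌈r⌉₊ * ‖f x‖) := by gcongr
      _ = ‖x‖ ^ (k + ⌈r⌉₊) * ‖iteratedFDeriv ℝ 0 f x‖ := by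
        rw [norm_iteratedFDeriv_zero, pow_add, mul_assoc]
      _ ≤ max C₁ C₂ := (hC₂ x).trans (le_max_right _ _)

theorem hasFDerivAt_norm_rpow_smul {f : 𝓢(E, F)} (hf : FlatAt f 0) (r : ℝ) (x : E) :
    HasFDerivAt (fun y => ‖y‖ ^ r • f y)
      (‖x‖ ^ r • fderivCLM ℝ E F f x + r • ‖x‖ ^ (r - 2) • innerSMulRight f x) x := by
  rcases eq_or_ne x 0 with rfl | hx
  · rw [hf.fderivCLM.apply_eq_zero, hf.innerSMulRight.apply_eq_zero]
    simp only [smul_zero, add_zero]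
    obtain ⟨C, -, hC⟩ := exists_norm_rpow_smul_le_mul_pow hf r 2
    refine hasFDerivAt_iff_isLittleO_nhds_zero.2 <|
      Asymptotics.IsBigO.trans_isLittleO ?_ (Asymptotics.isLittleO_norm_pow_id one_lt_two)
    refine .of_bound C ?_
    filter_upwards [Metric.closedBall_mem_nhds (0 : E) one_pos] with y hy
    simpa [hf.apply_eq_zero] using hC y (mem_closedBall_zero_iff.1 hy)
  · convert (hasFDerivAt_norm_rpow_of_ne_zero r hx).fun_smul (f.hasFDerivAt x) using 1
    ext v
    simp [innerSMulRight_apply, mul_smul]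

theorem differentiable_norm_rpow_smul {f : 𝓢(E, F)} (hf : FlatAt f 0) (r : ℝ) :
    Differentiable ℝ (fun y => ‖y‖ ^ r • f y) :=
  fun x => (hasFDerivAt_norm_rpow_smul hf r x).differentiableAt

theorem fderiv_norm_rpow_smul {f : 𝓢(E, F)} (hf : FlatAt f 0) (r : ℝ) :
    fderiv ℝ (fun y => ‖y‖ ^ r • f y) =
      fun x => ‖x‖ ^ r • fderivCLM ℝ E F f x + r • ‖x‖ ^ (r - 2) • innerSMulRight f x :=
  funext fun x => (hasFDerivAt_norm_rpow_smul hf r x).fderiv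

theorem contDiff_norm_rpow_smul {f : 𝓢(E, F)} (hf : FlatAt f 0) (r : ℝ) (n : ℕ) :
    ContDiff ℝ n (fun x => ‖x‖ ^ r • f x) := by
  induction n generalizing F r with
  | zero => exact contDiff_zero.2 (differentiable_norm_rpow_smul hf r).continuous
  | succ n ih =>
    rw [Nat.cast_succ, contDiff_succ_iff_fderiv, fderiv_norm_rpow_smul hf]
    exact ⟨differentiable_norm_rpow_smul hf r, by simp,
      (ih hf.fderivCLM r).add ((ih hf.innerSMulRight (r - 2)).const_smul r)⟩

theorem norm_iteratedFDeriv_succ_norm_rpow_smul_le {f : 𝓢(E, F)} (hf : FlatAt f 0)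
    (r : ℝ) (n : ℕ) (x : E) :
    ‖iteratedFDeriv ℝ (n + 1) (fun y => ‖y‖ ^ r • f y) x‖ ≤
      ‖iteratedFDeriv ℝ n (fun y => ‖y‖ ^ r • fderivCLM ℝ E F f y) x‖ +
        |r| * ‖iteratedFDeriv ℝ n (fun y => ‖y‖ ^ (r - 2) • innerSMulRight f y) x‖ := by
  have hA := contDiff_norm_rpow_smul hf.fderivCLM r n
  have hB := contDiff_norm_rpow_smul hf.innerSMulRight (r - 2) n
  rw [← norm_iteratedFDeriv_fderiv, fderiv_norm_rpow_smul hf,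
    fun_iteratedFDeriv_add_apply hA.contDiffAt (hB.const_smul r).contDiffAt,
    iteratedFDeriv_const_smul_apply' hB.contDiffAt]
  exact (norm_add_le _ _).trans_eq (by rw [norm_smul, Real.norm_eq_abs])

theorem iteratedFDeriv_norm_rpow_smul_zero {f : 𝓢(E, F)} (hf : FlatAt f 0) (r : ℝ) (n : ℕ) :
    iteratedFDeriv ℝ n (fun x => ‖x‖ ^ r • f x) 0 = 0 := by
  induction n generalizing F r with
  | zero =>
    ext
    simp [hf.apply_eq_zero]
  | succ n ih =>
    refine norm_le_zero_iff.1 ((norm_iteratedFDeriv_succ_norm_rpow_smul_le hf r n 0).trans ?_)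
    rw [ih hf.fderivCLM, ih hf.innerSMulRight]
    simp

theorem exists_pow_mul_norm_iteratedFDeriv_norm_rpow_smul_le {f : 𝓢(E, F)} (hf : FlatAt f 0)
    (r : ℝ) (k n : ℕ) :
    ∃ C, ∀ x : E, ‖x‖ ^ k * ‖iteratedFDeriv ℝ n (fun x => ‖x‖ ^ r • f x) x‖ ≤ C := by
  induction n generalizing F r with
  | zero => simpa using exists_pow_mul_norm_rpow_smul_le hf r k
  | succ n ih =>
    obtain ⟨A, hA⟩ := ih hf.fderivCLM r
    obtain ⟨B, hB⟩ := ih hf.innerSMulRight (r - 2)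
    refine ⟨A + |r| * B, fun x => ?_⟩
    grw [norm_iteratedFDeriv_succ_norm_rpow_smul_le hf r n x, mul_add, mul_left_comm, hA x, hB x]

theorem exists_eq_norm_rpow_smul {f : 𝓢(E, F)} (hf : FlatAt f 0) (r : ℝ) :
    ∃ g : 𝓢(E, F), FlatAt g 0 ∧ ⇑g = fun x => ‖x‖ ^ r • f x :=
  ⟨⟨fun x => ‖x‖ ^ r • f x, contDiff_infty.2 (contDiff_norm_rpow_smul hf r),
      fun k n => exists_pow_mul_norm_iteratedFDeriv_norm_rpow_smul_le hf r k n⟩,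
    iteratedFDeriv_norm_rpow_smul_zero hf r, rfl⟩

end SchwartzMap

end FlatSchwartz

section Moments

open Complex

variable {d : ℕ}

theorem iteratedFDeriv_fourier_zero_apply_single (f : 𝓢(Rd d, ℂ)) {n : ℕ} (ι : Fin n → Fin d) :
    iteratedFDeriv ℝ n (𝓕 ⇑f) 0 (fun j => EuclideanSpace.single (ι j) 1) =
      (-(2 * Real.pi * I)) ^ n * ∫ x : Rd d, (∏ j, (x (ι j) : ℂ)) * f x := by
  have hmeas : AEStronglyMeasurable f := f.continuous.aestronglyMeasurable
  rw [Real.iteratedFDeriv_fourier (N := ⊤) (fun k _ => f.integrable_pow_mul volume k) hmeas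
      le_top, Real.fourier_continuousMultilinearMap_apply
      (VectorFourier.integrable_fourierPowSMulRight _ (f.integrable_pow_mul volume n) hmeas),
    Real.fourier_eq, ← integral_const_mul]
  congr 1 with x
  have hcoord : ∀ j, innerSL ℝ x (EuclideanSpace.single (ι j) (1 : ℝ)) = x (ι j) := fun j => by
    rw [innerSL_apply_apply, EuclideanSpace.inner_single_right]
    simp
  simp [hcoord]

theorem exists_prod_comp_eq_prod_pow {M ι : Type*} [CommMonoid M] [Fintype ι] (γ : ι → ℕ) :
    ∃ (n : ℕ) (e : Fin n → ι), ∀ v : ι → M, ∏ j, v (e j) = ∏ i, v i ^ γ i := by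
  classical
  let σ := Fintype.equivFin (Σ i, Fin (γ i))
  refine ⟨_, fun j => (σ.symm j).1, fun v => ?_⟩
  rw [σ.symm.prod_comp (fun p => v p.1), ← Finset.univ_sigma_univ, Finset.prod_sigma]
  simp

theorem integral_prod_mul_eq_zero {φ : 𝓢(Rd d, ℂ)} (hφ : momentsVanish φ) {n : ℕ}
    (ι : Fin n → Fin d) : ∫ x : Rd d, (∏ j, (x (ι j) : ℂ)) * φ x = 0 := by
  classical
  have hfib : ∀ x : Rd d,
      ∏ j, (x (ι j) : ℂ) = ∏ i, (x i : ℂ) ^ (Finset.univ.filter fun j => ι j = i).card :=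
    fun x => by
      simp_rw [← Finset.prod_fiberwise' Finset.univ ι (fun i => (x i : ℂ)), Finset.prod_const]
  simp_rw [hfib]
  exact hφ _

theorem momentsVanish_iff_flatAt_fourier (φ : 𝓢(Rd d, ℂ)) :
    momentsVanish φ ↔ FlatAt (𝓕 ⇑φ) 0 := by
  have h2πi : (-(2 * Real.pi * I)) ≠ 0 := by simp [Real.pi_ne_zero, I_ne_zero]
  constructor
  · intro hφ n
    refine ContinuousMultilinearMap.toMultilinearMap_injective <| Module.Basis.ext_multilinear
      (fun _ => (EuclideanSpace.basisFun (Fin d) ℝ).toBasis) fun ι => ?_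
    simp [iteratedFDeriv_fourier_zero_apply_single, integral_prod_mul_eq_zero hφ]
  · intro hflat γ
    obtain ⟨n, ι, hι⟩ := exists_prod_comp_eq_prod_pow (M := ℂ) γ
    have h := iteratedFDeriv_fourier_zero_apply_single φ ι
    simp_rw [hflat n, zero_apply, fun x : Rd d => hι (fun i => (x i : ℂ))] at h
    exact (mul_eq_zero.1 h.symm).resolve_left (pow_ne_zero _ h2πi)

end Moments

section FractionalLaplacian

variable {d : ℕ}

theorem SchwartzMap.fourierInv_fourier_coe (ψ : 𝓢(Rd d, ℂ)) : 𝓕⁻ (𝓕 ⇑ψ) = ⇑ψ := by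
  rw [← fourier_coe, ← fourierInv_coe, fourierInv_fourier_eq]

theorem rieszFun_eq_fracLapFun_neg (s : ℝ) : rieszFun d s = fracLapFun d (-s) := rfl

theorem fracLapFun_zero (φ : 𝓢(Rd d, ℂ)) : fracLapFun d 0 φ = φ := by
  simp [fracLapFun, SchwartzMap.fourierInv_fourier_coe]

theorem fracLapFun_eq_of_fourier_eq {r : ℝ} {φ ψ : 𝓢(Rd d, ℂ)}
    (h : 𝓕 ⇑ψ = fun ξ => ((‖ξ‖ ^ r : ℝ) : ℂ) * 𝓕 ⇑φ ξ) : fracLapFun d r φ = ψ := by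
  rw [fracLapFun, ← h, SchwartzMap.fourierInv_fourier_coe]

theorem exists_fourier_eq_norm_rpow_mul (r : ℝ) {φ : 𝓢(Rd d, ℂ)} (hφ : momentsVanish φ) :
    ∃ ψ : 𝓢(Rd d, ℂ), momentsVanish ψ ∧ 𝓕 ⇑ψ = fun ξ => ((‖ξ‖ ^ r : ℝ) : ℂ) * 𝓕 ⇑φ ξ := by
  obtain ⟨g, hg, hgφ⟩ :=
    SchwartzMap.exists_eq_norm_rpow_smul (f := 𝓕 φ) ((momentsVanish_iff_flatAt_fourier φ).1 hφ) r
  let ψ : 𝓢(Rd d, ℂ) := 𝓕⁻ g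
  have hψ : 𝓕 ⇑ψ = ⇑g := by rw [← fourier_coe, fourier_fourierInv_eq]
  refine ⟨ψ, (momentsVanish_iff_flatAt_fourier _).2 (hψ ▸ hg), ?_⟩
  rw [hψ, hgφ]
  ext ξ
  simp [Complex.real_smul, fourier_coe]

theorem exists_eq_fracLapFun (r : ℝ) {φ : 𝓢(Rd d, ℂ)} (hφ : momentsVanish φ) :
    ∃ ψ : 𝓢(Rd d, ℂ), momentsVanish ψ ∧ ⇑ψ = fracLapFun d r φ := by
  obtain ⟨ψ, hψ, h⟩ := exists_fourier_eq_norm_rpow_mul r hφ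
  exact ⟨ψ, hψ, (fracLapFun_eq_of_fourier_eq h).symm⟩

theorem fracLapFun_fracLapFun {φ : 𝓢(Rd d, ℂ)} (hφ : momentsVanish φ) (r r' : ℝ) :
    fracLapFun d r' (fracLapFun d r φ) = fracLapFun d (r + r') φ := by
  obtain ⟨ψ, -, h⟩ := exists_fourier_eq_norm_rpow_mul r hφ
  rw [fracLapFun_eq_of_fourier_eq h, fracLapFun, fracLapFun, h]
  congr 1 with ξ
  rcases eq_or_ne ξ 0 with rfl | hξ
  -- `0 ^ r' * 0 ^ r` and `0 ^ (r + r')` may differ, but `𝓕 φ 0 = 0`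
  · simp [((momentsVanish_iff_flatAt_fourier φ).1 hφ).apply_eq_zero]
  · rw [← mul_assoc, ← Complex.ofReal_mul, ← Real.rpow_add (norm_pos_iff.2 hξ), add_comm r']

theorem fracLapFun_add_smul {φ ψ : 𝓢(Rd d, ℂ)} (hφ : momentsVanish φ) (hψ : momentsVanish ψ)
    (r : ℝ) (c : ℂ) :
    fracLapFun d r (⇑φ + c • ⇑ψ) = fracLapFun d r φ + c • fracLapFun d r ψ := by
  obtain ⟨φ', -, hφ'⟩ := exists_fourier_eq_norm_rpow_mul r hφ
  obtain ⟨ψ', -, hψ'⟩ := exists_fourier_eq_norm_rpow_mul r hψ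
  have hcoe : ∀ f g : 𝓢(Rd d, ℂ), ⇑(f + c • g) = ⇑f + c • ⇑g := fun _ _ => rfl
  have hlin : ∀ f g : 𝓢(Rd d, ℂ), 𝓕 ⇑(f + c • g) = 𝓕 ⇑f + c • 𝓕 ⇑g := fun f g => by
    rw [← fourier_coe, FourierAdd.fourier_add, FourierSMul.fourier_smul]
    rfl
  have h : 𝓕 ⇑(φ' + c • ψ') = fun ξ => ((‖ξ‖ ^ r : ℝ) : ℂ) * 𝓕 ⇑(φ + c • ψ) ξ := by
    rw [hlin, hlin, hφ', hψ']
    ext ξ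
    simp only [Pi.add_apply, Pi.smul_apply, smul_eq_mul]
    ring
  rw [← hcoe, fracLapFun_eq_of_fourier_eq h, hcoe, fracLapFun_eq_of_fourier_eq hφ',
    fracLapFun_eq_of_fourier_eq hψ']

end FractionalLaplacian

theorem stmt_1_general (d : ℕ) (s : ℝ) :
    (∀ φ : 𝓢(Rd d, ℂ), momentsVanish φ →
        ∃ ψ : 𝓢(Rd d, ℂ), momentsVanish ψ ∧ ⇑ψ = fracLapFun d s φ) ∧
    (∀ φ : 𝓢(Rd d, ℂ), momentsVanish φ →
        ∃ ψ : 𝓢(Rd d, ℂ), momentsVanish ψ ∧ ⇑ψ = rieszFun d s φ) ∧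
    (∀ φ : 𝓢(Rd d, ℂ), momentsVanish φ →
        rieszFun d s (fracLapFun d s φ) = ⇑φ ∧ fracLapFun d s (rieszFun d s φ) = ⇑φ) ∧
    (∀ φ ψ : 𝓢(Rd d, ℂ), momentsVanish φ → momentsVanish ψ → ∀ c : ℂ,
        fracLapFun d s (⇑φ + c • ⇑ψ) = fracLapFun d s ⇑φ + c • fracLapFun d s ⇑ψ) := by
  simp only [rieszFun_eq_fracLapFun_neg]
  refine ⟨fun φ hφ => exists_eq_fracLapFun s hφ, fun φ hφ => exists_eq_fracLapFun (-s) hφ,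
    fun φ hφ => ⟨?_, ?_⟩, fun φ ψ hφ hψ c => fracLapFun_add_smul hφ hψ s c⟩
  · rw [fracLapFun_fracLapFun hφ, add_neg_cancel, fracLapFun_zero]
  · rw [fracLapFun_fracLapFun hφ, neg_add_cancel, fracLapFun_zero]

/-- φ ↦ F⁻¹(|ξ|^s Fφ) is a bijective linear isomorphism of S_∞ onto
itself with inverse φ ↦ F⁻¹(|ξ|^{-s} Fφ). -/
theorem stmt_1 (d : ℕ) (s : ℝ) (hs : 0 < s) :
    (∀ φ : 𝓢(Rd d, ℂ), momentsVanish φ →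
        ∃ ψ : 𝓢(Rd d, ℂ), momentsVanish ψ ∧ ⇑ψ = fracLapFun d s φ) ∧
    (∀ φ : 𝓢(Rd d, ℂ), momentsVanish φ →
        ∃ ψ : 𝓢(Rd d, ℂ), momentsVanish ψ ∧ ⇑ψ = rieszFun d s φ) ∧
    (∀ φ : 𝓢(Rd d, ℂ), momentsVanish φ →
        rieszFun d s (fracLapFun d s φ) = ⇑φ ∧ fracLapFun d s (rieszFun d s φ) = ⇑φ) ∧
    (∀ φ ψ : 𝓢(Rd d, ℂ), momentsVanish φ → momentsVanish ψ → ∀ c : ℂ,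
        fracLapFun d s (⇑φ + c • ⇑ψ) = fracLapFun d s ⇑φ + c • fracLapFun d s ⇑ψ) :=
  stmt_1_general d s
end
end

section
/- Let 1 < p < ∞ and d/p < ν < 1 + d/p. For a ∈ ℝ^d \ {0}, the function g_a(x) = |a - x|^{ν-d} - |x|^{ν-d} belongs to L^{p'}(ℝ^d), where 1/p + 1/p' = 1, and ‖g_a‖_{L^{p'}} = C |a|^{ν - d/p} for a constant C independent of a. -/
open MeasureTheory SchwartzMap ENNReal NNReal Filter Topology
noncomputable section

/-!
By a rotation and the dilation `x ↦ ‖a‖ x`, `g_a` is `‖a‖ ^ (ν - d)` times `g_e ∘ ψ` for a unit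
vector `e` and a linear map `ψ` of Jacobian `‖a‖ ^ (-d)`; this gives the homogeneity
`‖g_a‖_{p'} = ‖a‖ ^ (ν - d + d / p') ‖g_e‖_{p'}`, and `ν - d + d / p' = ν - d / p`.

Integrability: near the two singularities, `|x| ^ (ν - d)` is `L^{p'}` since `(ν - d) p' > -d`;
far away, the mean value theorem gives `|g_a(x)| ≲ |a| |x| ^ (ν - d - 1)`, which is `L^{p'}`
since `(ν - d - 1) p' < -d`.
-/

open Metric Set Module

theorem abs_rpow_sub_rpow_le {m A B s : ℝ} (hm : 0 < m) (hA : m ≤ A) (hB : m ≤ B) (hs : s ≤ 1) :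
    |A ^ s - B ^ s| ≤ |s| * m ^ (s - 1) * |A - B| := by
  have hderiv : ∀ x ∈ Ici m, HasDerivWithinAt (· ^ s) (s * x ^ (s - 1)) (Ici m) x :=
    fun x hx => (Real.hasDerivAt_rpow_const (Or.inl (hm.trans_le hx).ne')).hasDerivWithinAt
  have hbound : ∀ x ∈ Ici m, ‖s * x ^ (s - 1)‖ ≤ |s| * m ^ (s - 1) := fun x hx => by
    rw [norm_mul, Real.norm_eq_abs, Real.norm_of_nonneg (Real.rpow_nonneg (hm.le.trans hx) _)]
    exact mul_le_mul_of_nonneg_left (Real.rpow_le_rpow_of_nonpos hm hx (by linarith)) (abs_nonneg s)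
  simpa [Real.norm_eq_abs] using
    (convex_Ici m).norm_image_sub_le_of_norm_hasDerivWithin_le hderiv hbound hB hA

theorem abs_norm_sub_rpow_sub_norm_rpow_le {E : Type*} [SeminormedAddCommGroup E] {s : ℝ}
    (hs : s ≤ 1) {c x : E} (hx₀ : 0 < ‖x‖) (hx : 2 * ‖c‖ ≤ ‖x‖) :
    |‖c - x‖ ^ s - ‖x‖ ^ s| ≤ |s| * ‖c‖ * 2 ^ (1 - s) * ‖x‖ ^ (s - 1) := by
  have hdiff : |‖c - x‖ - ‖x‖| ≤ ‖c‖ := by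
    simpa [norm_sub_rev x] using abs_norm_sub_norm_le (x - c) x
  have hfar : ‖x‖ / 2 ≤ ‖c - x‖ := by linarith [(abs_le.mp hdiff).1]
  calc |‖c - x‖ ^ s - ‖x‖ ^ s| ≤ |s| * (‖x‖ / 2) ^ (s - 1) * |‖c - x‖ - ‖x‖| :=
        abs_rpow_sub_rpow_le (by positivity) hfar (by linarith) hs
    _ ≤ |s| * (‖x‖ / 2) ^ (s - 1) * ‖c‖ := by gcongr
    _ = |s| * ‖c‖ * 2 ^ (1 - s) * ‖x‖ ^ (s - 1) := by
        rw [Real.div_rpow (norm_nonneg _) zero_le_two, ← neg_sub s 1, Real.rpow_neg zero_le_two]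
        ring

theorem memLp_norm_rpow_iff_integrable {E : Type*} [NormedAddCommGroup E] [MeasurableSpace E]
    [OpensMeasurableSpace E] {ν : Measure E} {p : ℝ≥0∞} (hp₀ : p ≠ 0) (hp : p ≠ ∞)
    {s : ℝ} : MemLp (fun x : E => ‖x‖ ^ s) p ν ↔ Integrable (fun x => ‖x‖ ^ (s * p.toReal)) ν := by
  rw [← integrable_norm_rpow_iff (measurable_norm.pow_const s).aestronglyMeasurable hp₀ hp]
  refine integrable_congr (ae_of_all _ fun x => ?_)
  dsimp only
  rw [Real.norm_of_nonneg (by positivity), ← Real.rpow_mul (norm_nonneg x)]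

section AddHaar

variable {E : Type*} [NormedAddCommGroup E] [NormedSpace ℝ E] [FiniteDimensional ℝ E]
  [MeasurableSpace E] [BorelSpace E] {μ : Measure E} [μ.IsAddHaarMeasure]

theorem locallyIntegrable_norm_rpow [Nontrivial E] {u : ℝ} (hu : -(finrank ℝ E : ℝ) < u) :
    LocallyIntegrable (fun x : E => ‖x‖ ^ u) μ :=
  locallyIntegrable_of_norm_le_rpow finrank_pos (C := 1) (α := -u) (by linarith)
    (ae_of_all _ fun x => by rw [neg_neg, one_mul, Real.norm_of_nonneg (by positivity)])
    (measurable_norm.pow_const u).aestronglyMeasurable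

theorem integrableOn_norm_rpow_compl_ball {u r : ℝ} (hu : u < -(finrank ℝ E : ℝ)) (hr : 0 < r) :
    IntegrableOn (fun x : E => ‖x‖ ^ u) (ball 0 r)ᶜ μ := by
  have hu₀ : u < 0 := hu.trans_le (by simp)
  refine ((integrable_one_add_norm (μ := μ) (r := -u) (by linarith)).const_mul
    ((r⁻¹ + 1) ^ (-u))).integrableOn.mono'
    (measurable_norm.pow_const u).aestronglyMeasurable ?_
  refine (ae_restrict_iff' measurableSet_ball.compl).2 (ae_of_all _ fun x hx => ?_)
  have hrx : r ≤ ‖x‖ := by simpa using hx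
  have hx₀ : 0 < ‖x‖ := hr.trans_le hrx
  have h1 : 1 + ‖x‖ ≤ (r⁻¹ + 1) * ‖x‖ := by
    have : 1 ≤ r⁻¹ * ‖x‖ := by rw [← div_eq_inv_mul, one_le_div hr]; exact hrx
    linarith
  rw [Real.norm_of_nonneg (by positivity), neg_neg]
  calc ‖x‖ ^ u = (r⁻¹ + 1) ^ (-u) * ((r⁻¹ + 1) * ‖x‖) ^ u := by
        rw [Real.mul_rpow (by positivity) hx₀.le, ← mul_assoc, ← Real.rpow_add (by positivity)]
        simp
    _ ≤ (r⁻¹ + 1) ^ (-u) * (1 + ‖x‖) ^ u :=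
        mul_le_mul_of_nonneg_left (Real.rpow_le_rpow_of_nonpos (by positivity) h1 hu₀.le)
          (by positivity)

theorem memLp_norm_sub_rpow_restrict_ball [Nontrivial E] {p : ℝ≥0∞} (hp₀ : p ≠ 0) (hp : p ≠ ∞)
    {s : ℝ} (hs : -(finrank ℝ E : ℝ) < s * p.toReal) (c : E) (r : ℝ) :
    MemLp (fun x => ‖c - x‖ ^ s) p (μ.restrict (ball 0 r)) := by
  have hball : MemLp (fun y : E => ‖y‖ ^ s) p (μ.restrict (ball c r)) :=
    (memLp_norm_rpow_iff_integrable hp₀ hp).2 <|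
      ((locallyIntegrable_norm_rpow hs).integrableOn_isCompact (isCompact_closedBall c r)).mono_set
        ball_subset_closedBall
  have hpre : (c - ·) ⁻¹' ball c r = ball (0 : E) r := by
    ext x
    simp [dist_eq_norm]
  have htrans : MeasurePreserving (c - ·) (μ.restrict (ball 0 r)) (μ.restrict (ball c r)) := by
    rw [← hpre]
    exact (Measure.measurePreserving_sub_left μ c).restrict_preimage measurableSet_ball
  exact hball.comp_measurePreserving htrans

theorem memLp_norm_sub_rpow_sub_norm_rpow {p : ℝ≥0∞} (hp₀ : p ≠ 0) (hp : p ≠ ∞) {s : ℝ}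
    (hs₀ : -(finrank ℝ E : ℝ) < s * p.toReal) (hs₁ : (s - 1) * p.toReal < -(finrank ℝ E : ℝ))
    {c : E} (hc : c ≠ 0) :
    MemLp (fun x => ‖c - x‖ ^ s - ‖x‖ ^ s) p μ := by
  have : Nontrivial E := ⟨⟨c, 0, hc⟩⟩
  have hp_pos : 0 < p.toReal := ENNReal.toReal_pos hp₀ hp
  have hs : s ≤ 1 := by nlinarith [(Nat.cast_nonneg (finrank ℝ E) : (0 : ℝ) ≤ _)]
  classical
  rw [← Set.piecewise_same (ball (0 : E) (2 * ‖c‖)) fun x => ‖c - x‖ ^ s - ‖x‖ ^ s]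
  refine MemLp.piecewise measurableSet_ball ?_ ?_
  · have hnear := memLp_norm_sub_rpow_restrict_ball (μ := μ) hp₀ hp hs₀ (0 : E) (2 * ‖c‖)
    simp only [zero_sub, norm_neg] at hnear
    exact (memLp_norm_sub_rpow_restrict_ball hp₀ hp hs₀ c _).sub hnear
  · have hdecay : MemLp (fun x : E => ‖x‖ ^ (s - 1)) p (μ.restrict (ball 0 (2 * ‖c‖))ᶜ) :=
      (memLp_norm_rpow_iff_integrable hp₀ hp).2 <|
        integrableOn_norm_rpow_compl_ball hs₁ (by positivity)
    refine (hdecay.const_mul (|s| * ‖c‖ * 2 ^ (1 - s))).of_le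
      (by fun_prop) ((ae_restrict_iff' measurableSet_ball.compl).2 (ae_of_all _ fun x hx => ?_))
    have hx : 2 * ‖c‖ ≤ ‖x‖ := by simpa using hx
    rw [Real.norm_eq_abs, Real.norm_of_nonneg (by positivity)]
    exact abs_norm_sub_rpow_sub_norm_rpow_le hs (by linarith [norm_pos_iff.2 hc]) hx

end AddHaar

section InnerProductSpace

variable {E : Type*} [NormedAddCommGroup E] [InnerProductSpace ℝ E] [FiniteDimensional ℝ E]
  [MeasurableSpace E] [BorelSpace E]

theorem eLpNorm_norm_sub_rpow_sub_norm_rpow_eq {p : ℝ≥0∞} (hp : p ≠ ∞) (s : ℝ) {e a : E}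
    (he : ‖e‖ = 1) (ha : a ≠ 0) :
    eLpNorm (fun x => ‖a - x‖ ^ s - ‖x‖ ^ s) p volume =
      ENNReal.ofReal (‖a‖ ^ (s + finrank ℝ E / p.toReal)) *
        eLpNorm (fun x => ‖e - x‖ ^ s - ‖x‖ ^ s) p volume := by
  set c := ‖a‖
  have hc : 0 < c := norm_pos_iff.2 ha
  obtain ⟨R, hR⟩ : ∃ R : E ≃ₗᵢ[ℝ] E, R e = c⁻¹ • a :=
    ⟨_, Submodule.reflection_sub (by rw [he, norm_smul, norm_inv, norm_norm, inv_mul_cancel₀ hc.ne'])⟩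
  set ψ : E → E := fun x => R.symm (c⁻¹ • x)
  have hscale : (fun x => ‖a - x‖ ^ s - ‖x‖ ^ s) =
      c ^ s • ((fun x => ‖e - x‖ ^ s - ‖x‖ ^ s) ∘ ψ) := by
    ext x
    have hnorm : ∀ y : E, ‖y‖ = c * ‖R.symm (c⁻¹ • y)‖ := fun y => by
      rw [LinearIsometryEquiv.norm_map, norm_smul, norm_inv, norm_norm, mul_inv_cancel_left₀ hc.ne']
    have hsub : R.symm (c⁻¹ • (a - x)) = e - ψ x := by
      rw [smul_sub, map_sub, ← hR, LinearIsometryEquiv.symm_apply_apply]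
    simp only [Pi.smul_apply, Function.comp_apply, smul_eq_mul]
    rw [hnorm (a - x), hnorm x, hsub, Real.mul_rpow hc.le (norm_nonneg _),
      Real.mul_rpow hc.le (norm_nonneg _), mul_sub]
  have hmap : Measure.map ψ volume = ENNReal.ofReal (c ^ finrank ℝ E) • volume := by
    have hsmul := Measure.map_addHaar_smul (volume : Measure E) (inv_ne_zero hc.ne')
    rw [inv_pow, inv_inv, abs_of_pos (by positivity)] at hsmul
    change Measure.map (R.symm ∘ (c⁻¹ • ·)) volume = _
    rw [← Measure.map_map R.symm.continuous.measurable (measurable_const_smul _), hsmul,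
      Measure.map_smul, R.symm.measurePreserving.map_eq]
  have hψ : Measurable ψ := (R.symm.continuous.comp (continuous_const_smul _)).measurable
  rw [hscale, eLpNorm_const_smul, ← eLpNorm_map_measure (by rw [hmap]; fun_prop) hψ.aemeasurable,
    hmap, eLpNorm_smul_measure_of_ne_top hp, smul_eq_mul, ← mul_assoc,
    Real.enorm_of_nonneg (by positivity), ENNReal.ofReal_rpow_of_nonneg (by positivity)
      (by positivity), ← ENNReal.ofReal_mul (by positivity), ← Real.rpow_natCast,
    ← Real.rpow_mul hc.le, ← Real.rpow_add hc, one_div, ENNReal.toReal_inv, div_eq_mul_inv]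

end InnerProductSpace

/-- for d/p < ν < 1+d/p and a ≠ 0, g_a ∈ L^{p'} with
‖g_a‖_{L^{p'}} = C |a|^{ν-d/p}, C independent of a. -/
theorem stmt_5 (d : ℕ) (hd : 0 < d) (p q ν : ℝ) (hp : 1 < p) (hq : 1 / p + 1 / q = 1)
    (hν1 : (d : ℝ) / p < ν) (hν2 : ν < 1 + (d : ℝ) / p) :
    ∃ C : ℝ, 0 ≤ C ∧ ∀ a : Rd d, a ≠ 0 →
      MemLp (gFun d ν a) (ENNReal.ofReal q) volume ∧
      (eLpNorm (gFun d ν a) (ENNReal.ofReal q) volume).toReal =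
        C * ‖a‖ ^ (ν - (d : ℝ) / p) := by
  have hq₀ : 0 < q := one_div_pos.1 (by linarith [(div_lt_one (by linarith)).2 hp])
  have hqq : (ENNReal.ofReal q).toReal = q := ENNReal.toReal_ofReal hq₀.le
  have hdim : (finrank ℝ (Rd d) : ℝ) = d := by simp
  have hdq : (d : ℝ) / p = d - d / q := by linear_combination (d : ℝ) * hq
  have hdq' : (d : ℝ) / q * q = d := div_mul_cancel₀ _ hq₀.ne'
  have hs₀ : -(d : ℝ) < (ν - d) * q := by nlinarith
  have hs₁ : (ν - d - 1) * q < -(d : ℝ) := by nlinarith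
  set e : Rd d := EuclideanSpace.single ⟨0, hd⟩ 1
  have he : ‖e‖ = 1 := by simp [e]
  refine ⟨(eLpNorm (gFun d ν e) (ENNReal.ofReal q) volume).toReal, ENNReal.toReal_nonneg,
    fun a ha => ⟨?_, ?_⟩⟩
  · exact memLp_norm_sub_rpow_sub_norm_rpow (by simpa using hq₀) ENNReal.ofReal_ne_top
      (by rwa [hqq, hdim]) (by rwa [hqq, hdim]) ha
  · unfold gFun
    rw [eLpNorm_norm_sub_rpow_sub_norm_rpow_eq ENNReal.ofReal_ne_top _ he ha,
      ENNReal.toReal_mul, ENNReal.toReal_ofReal (by positivity), hqq, hdim, mul_comm, hdq]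
    congr 2
    ring
end
end
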